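/- arXiv:1508.07442 — 7 statements merged into one kernel-verified Lean document; each statement's English description precedes it below -/
import Mathlib

section
/- Let E be an evolution algebra with natural basis e₁,…,e_m, V a vector space with basis e_{m+1},…,e_n, and θ : E × E → V a symmetric bilinear map with θ(eᵢ,eⱼ) = 0 for i ≠ j. Define the algebra E_θ on E ⊕ V by (x+v)⋆(y+w) = xy + θ(x,y). Then ann(E_θ) = (θ^⊥ ∩ ann(E)) ⊕ V, where θ^⊥ = {x ∈ E : θ(x,E) = 0}. -/
theorem stmt1_general {F E V : Type*} [Field F] [AddCommGroup E] [Module F E]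
    [AddCommGroup V] [Module F V]
    (m : E →ₗ[F] E →ₗ[F] E)
    (θ : E →ₗ[F] E →ₗ[F] V) :
    ∀ p : E × V,
      (∀ q : E × V, (m p.1 q.1, θ p.1 q.1) = (0 : E × V)) ↔
        p.1 ∈ LinearMap.ker θ ⊓ LinearMap.ker m := by
  intro p
  simp only [Prod.forall, forall_const, Prod.mk_eq_zero, forall_and, Submodule.mem_inf,
    LinearMap.mem_ker, LinearMap.ext_iff, LinearMap.zero_apply]
  exact and_comm

/-- Let `E` be an evolution algebra with natural basis `e₁,…,e_m`
(multiplication the commutative bilinear map `m`), `V` a vector space, and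
`θ : E × E → V` a symmetric bilinear map with `θ(eᵢ,eⱼ) = 0` for `i ≠ j`.
On `E_θ = E ⊕ V` define `(x+v)⋆(y+w) = xy + θ(x,y)`.  Then
`ann(E_θ) = (θ^⊥ ∩ ann(E)) ⊕ V`, i.e. an element `p = (x, v)` annihilates `E_θ`
iff `x ∈ θ^⊥ ∩ ann(E)` (the `V`-component being arbitrary). -/
theorem stmt1 {F E V : Type*} [Field F] [AddCommGroup E] [Module F E]
    [AddCommGroup V] [Module F V] {mdim : ℕ}
    (m : E →ₗ[F] E →ₗ[F] E) (hcomm : ∀ x y : E, m x y = m y x)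
    (b : Module.Basis (Fin mdim) F E) (hnat : ∀ i j : Fin mdim, i ≠ j → m (b i) (b j) = 0)
    (θ : E →ₗ[F] E →ₗ[F] V) (hθsym : ∀ x y : E, θ x y = θ y x)
    (hθnat : ∀ i j : Fin mdim, i ≠ j → θ (b i) (b j) = 0) :
    ∀ p : E × V,
      (∀ q : E × V, (m p.1 q.1, θ p.1 q.1) = (0 : E × V)) ↔
        p.1 ∈ LinearMap.ker θ ⊓ LinearMap.ker m :=
  stmt1_general m θ
end

section
/- Let E be a finite-dimensional evolution algebra over a field F with ann(E) ≠ 0. Then there exist an evolution algebra E' and a symmetric bilinear cocycle θ : E' × E' → V (V = ann(E)) vanishing on distinct natural basis elements, with θ^⊥ ∩ ann(E') = 0, such that E ≅ E'_θ and E/ann(E) ≅ E'. -/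
/-!
The annihilator `ann(E) = ker m` is spanned by the natural basis vectors of zero square, so the
remaining basis vectors span a complement `W ≅ E'`, and `E ≅ W × ann(E)`. Since `ann(E)`
annihilates from both sides, the product of `E` only sees the `W`-components; its two components
are the multiplication of `E'` and the cocycle `θ`, and both vanish on distinct basis vectors
because the product of `E` does. An element of `θ^⊥ ∩ ann(E')` annihilates `W` and `ann(E)`, hence
all of `E`, so it lies in `W ∩ ann(E) = 0`.
-/

namespace LinearMap

lemma apply_eq_zero_of_mem_ker_right {R E : Type*} [CommRing R] [AddCommGroup E] [Module R E]
    {m : E →ₗ[R] E →ₗ[R] E} (hcomm : ∀ x y, m x y = m y x) {k : E} (hk : k ∈ ker m) (x : E) : m x k = 0 := by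
  rw [hcomm, mem_ker.mp hk, zero_apply]

section Complement

variable {R E G : Type*} [CommRing R] [AddCommGroup E] [Module R E] [AddCommGroup G] [Module R G]
  (m : E →ₗ[R] E →ₗ[R] E) {L : G →ₗ[R] E} (hL : Function.Injective L)
  (hc : IsCompl (range L) (ker m))

noncomputable def prodKerEquivOfIsCompl : E ≃ₗ[R] G × ker m :=
  (((LinearEquiv.ofInjective L hL).prodCongr (LinearEquiv.refl R _)).trans
    (Submodule.prodEquivOfIsCompl _ _ hc)).symm

local notation "σ" => prodKerEquivOfIsCompl m hL hc

lemma prodKerEquivOfIsCompl_symm_apply (a : G) (k : ker m) : (σ).symm (a, k) = L a + k := by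
  simp [prodKerEquivOfIsCompl]

lemma prodKerEquivOfIsCompl_apply_self (a : G) : σ (L a) = (a, 0) := by
  rw [← LinearEquiv.eq_symm_apply, prodKerEquivOfIsCompl_symm_apply, ZeroMemClass.coe_zero,
    add_zero]

lemma prodKerEquivOfIsCompl_symm_apply_apply (x : E) : L (σ x).1 + (σ x).2 = x := by
  rw [← prodKerEquivOfIsCompl_symm_apply m hL hc, LinearEquiv.symm_apply_apply]

lemma prodKerEquivOfIsCompl_fst_eq_zero_iff (x : E) : (σ x).1 = 0 ↔ x ∈ ker m := by
  constructor
  · intro hx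
    rw [← prodKerEquivOfIsCompl_symm_apply_apply m hL hc x, hx, map_zero, zero_add]
    exact (σ x).2.2
  · intro hx
    rw [show σ x = (0, ⟨x, hx⟩) by
      rw [← LinearEquiv.eq_symm_apply, prodKerEquivOfIsCompl_symm_apply, map_zero, zero_add]]

variable {m} in
lemma apply_eq_apply_prodKerEquivOfIsCompl_fst (hcomm : ∀ x y, m x y = m y x) (x y : E) :
    m x y = m (L (σ x).1) (L (σ y).1) := by
  conv_lhs => rw [← prodKerEquivOfIsCompl_symm_apply_apply m hL hc x,
    ← prodKerEquivOfIsCompl_symm_apply_apply m hL hc y]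
  simp only [map_add, mem_ker.mp (σ x).2.2, add_zero,
    apply_eq_zero_of_mem_ker_right hcomm (σ y).2.2]

noncomputable def mulOfIsCompl : G →ₗ[R] G →ₗ[R] G :=
  (m.compl₁₂ L L).compr₂ (fst R G (ker m) ∘ₗ (σ).toLinearMap)

noncomputable def cocycleOfIsCompl : G →ₗ[R] G →ₗ[R] ker m :=
  (m.compl₁₂ L L).compr₂ (snd R G (ker m) ∘ₗ (σ).toLinearMap)

@[simp]
lemma mulOfIsCompl_apply (a c : G) : mulOfIsCompl m hL hc a c = (σ (m (L a) (L c))).1 := rfl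

@[simp]
lemma cocycleOfIsCompl_apply (a c : G) :
    cocycleOfIsCompl m hL hc a c = (σ (m (L a) (L c))).2 := rfl

variable {m}

lemma prodKerEquivOfIsCompl_map_mul (hcomm : ∀ x y, m x y = m y x) (x y : E) :
    σ (m x y) = (mulOfIsCompl m hL hc (σ x).1 (σ y).1,
      cocycleOfIsCompl m hL hc (σ x).1 (σ y).1) := by
  rw [apply_eq_apply_prodKerEquivOfIsCompl_fst hL hc hcomm]
  rfl

lemma ker_cocycleOfIsCompl_inf_ker_mulOfIsCompl (hcomm : ∀ x y, m x y = m y x) :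
    ker (cocycleOfIsCompl m hL hc) ⊓ ker (mulOfIsCompl m hL hc) = ⊥ := by
  refine (Submodule.eq_bot_iff _).mpr fun a ⟨hθ, hm'⟩ => hL ?_
  have hLa : ∀ c, m (L a) (L c) = 0 := fun c => by
    apply (σ).injective
    rw [map_zero]
    exact Prod.ext (by simpa using congr($(mem_ker.mp hm') c))
      (by simpa using congr($(mem_ker.mp hθ) c))
  have hLa_mem : L a ∈ ker m := by
    refine mem_ker.mpr (LinearMap.ext fun y => ?_)
    rw [apply_eq_apply_prodKerEquivOfIsCompl_fst hL hc hcomm, prodKerEquivOfIsCompl_apply_self,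
      hLa, zero_apply]
  rw [map_zero]
  exact Submodule.disjoint_def.mp hc.disjoint _ (mem_range_self L a) hLa_mem

end Complement

lemma apply_basis_eq_smul {R E ι : Type*} [CommRing R] [AddCommGroup E] [Module R E]
    {m : E →ₗ[R] E →ₗ[R] E} (b : Module.Basis ι R E) (hnat : ∀ i j, i ≠ j → m (b i) (b j) = 0)
    (x : E) (j : ι) : m x (b j) = b.repr x j • m (b j) (b j) := by
  classical
  have : m.flip (b j) = toSpanSingleton R E (m (b j) (b j)) ∘ₗ b.coord j := b.ext fun i => by
    rcases eq_or_ne i j with rfl | hij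
    · simp
    · simp [hnat i j hij, hij]
  exact congr($this x)

lemma ker_eq_span_image_basis_of_sq_eq_zero {K E ι : Type*} [Field K] [AddCommGroup E]
    [Module K E] {m : E →ₗ[K] E →ₗ[K] E} (b : Module.Basis ι K E)
    (hnat : ∀ i j, i ≠ j → m (b i) (b j) = 0) :
    ker m = Submodule.span K (b '' {i | m (b i) (b i) = 0}) := by
  ext x
  have hx : x ∈ ker m ↔ ∀ j, m x (b j) = 0 :=
    ⟨fun h j => by rw [mem_ker.mp h, zero_apply], fun h => mem_ker.mpr (b.ext h)⟩
  rw [hx, Module.Basis.mem_span_image, Set.subset_def]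
  refine forall_congr' fun j => ?_
  rw [apply_basis_eq_smul b hnat, smul_eq_zero, or_iff_not_imp_left, Finset.mem_coe,
    Finsupp.mem_support_iff, Set.mem_ofPred_eq]

end LinearMap

theorem stmt2_general {F E : Type*} [Field F] [AddCommGroup E] [Module F E] {n : ℕ}
    (m : E →ₗ[F] E →ₗ[F] E) (hcomm : ∀ x y : E, m x y = m y x)
    (b : Module.Basis (Fin n) F E) (hnat : ∀ i j : Fin n, i ≠ j → m (b i) (b j) = 0) :
    ∃ (n' : ℕ) (m' : (Fin n' → F) →ₗ[F] (Fin n' → F) →ₗ[F] (Fin n' → F))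
      (b' : Module.Basis (Fin n') F (Fin n' → F))
      (θ : (Fin n' → F) →ₗ[F] (Fin n' → F) →ₗ[F] ↥(LinearMap.ker m)),
      (∀ x y, m' x y = m' y x) ∧
      (∀ i j : Fin n', i ≠ j → m' (b' i) (b' j) = 0) ∧
      (∀ x y, θ x y = θ y x) ∧
      (∀ i j : Fin n', i ≠ j → θ (b' i) (b' j) = 0) ∧
      LinearMap.ker θ ⊓ LinearMap.ker m' = ⊥ ∧
      ∃ σ : E ≃ₗ[F] (Fin n' → F) × ↥(LinearMap.ker m),
        (∀ x y : E, σ (m x y) = (m' (σ x).1 (σ y).1, θ (σ x).1 (σ y).1)) ∧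
        (∀ x : E, (σ x).1 = 0 ↔ x ∈ LinearMap.ker m) := by
  classical
  set S := Finset.univ.filter fun i => m (b i) (b i) ≠ 0
  let ι := S.orderEmbOfFin rfl
  let L := Fintype.linearCombination F (b ∘ ι)
  have hL : Function.Injective L :=
    (b.linearIndependent.comp ι ι.injective).fintypeLinearCombination_injective
  have hc : IsCompl (LinearMap.range L) (LinearMap.ker m) := by
    rw [Fintype.range_linearCombination, Set.range_comp, Finset.range_orderEmbOfFin,
      LinearMap.ker_eq_span_image_basis_of_sq_eq_zero b hnat,
      show {i | m (b i) (b i) = 0} = (↑S)ᶜ by ext; simp [S]]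
    exact b.linearIndependent.isCompl_span_image b.span_eq isCompl_compl
  have hLb (i) : L (Pi.single i 1) = b (ι i) := by simp [L]
  refine ⟨S.card, m.mulOfIsCompl hL hc, Pi.basisFun F _, m.cocycleOfIsCompl hL hc,
    fun a c => by simp [hcomm], fun i j hij => by simp [hLb, hnat _ _ (ι.injective.ne hij)],
    fun a c => by simp [hcomm], fun i j hij => by simp [hLb, hnat _ _ (ι.injective.ne hij)],
    LinearMap.ker_cocycleOfIsCompl_inf_ker_mulOfIsCompl hL hc hcomm,
    m.prodKerEquivOfIsCompl hL hc,
    LinearMap.prodKerEquivOfIsCompl_map_mul hL hc hcomm,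
    m.prodKerEquivOfIsCompl_fst_eq_zero_iff hL hc⟩

/-- Let `E` be a finite-dimensional evolution algebra over `F`
(multiplication `m`, natural basis `b`) with `ann(E) = ker m ≠ 0`.  Then there exist an
evolution algebra `E'` (realized on `Fin n' → F`, with multiplication `m'` and natural
basis `b'`) and a symmetric bilinear cocycle `θ : E' × E' → V` with `V = ann(E)`,
vanishing on distinct natural basis elements and with `θ^⊥ ∩ ann(E') = 0`, such that
`E ≅ E'_θ` (via `σ`) and `E / ann(E) ≅ E'` (the multiplicative surjection
`x ↦ (σ x).1` onto `E'` has kernel exactly `ann(E)`). -/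
theorem stmt2 {F E : Type*} [Field F] [AddCommGroup E] [Module F E] {n : ℕ}
    (m : E →ₗ[F] E →ₗ[F] E) (hcomm : ∀ x y : E, m x y = m y x)
    (b : Module.Basis (Fin n) F E) (hnat : ∀ i j : Fin n, i ≠ j → m (b i) (b j) = 0)
    (hann : LinearMap.ker m ≠ ⊥) :
    ∃ (n' : ℕ) (m' : (Fin n' → F) →ₗ[F] (Fin n' → F) →ₗ[F] (Fin n' → F))
      (b' : Module.Basis (Fin n') F (Fin n' → F))
      (θ : (Fin n' → F) →ₗ[F] (Fin n' → F) →ₗ[F] ↥(LinearMap.ker m)),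
      (∀ x y, m' x y = m' y x) ∧
      (∀ i j : Fin n', i ≠ j → m' (b' i) (b' j) = 0) ∧
      (∀ x y, θ x y = θ y x) ∧
      (∀ i j : Fin n', i ≠ j → θ (b' i) (b' j) = 0) ∧
      LinearMap.ker θ ⊓ LinearMap.ker m' = ⊥ ∧
      ∃ σ : E ≃ₗ[F] (Fin n' → F) × ↥(LinearMap.ker m),
        (∀ x y : E, σ (m x y) = (m' (σ x).1 (σ y).1, θ (σ x).1 (σ y).1)) ∧
        (∀ x : E, (σ x).1 = 0 ↔ x ∈ LinearMap.ker m) :=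
  stmt2_general m hcomm b hnat
end

section
/- Let E be an evolution algebra, θ ∈ Z(E×E, V), and φ an automorphism of E such that θ(φ(eᵢ), φ(eⱼ)) = 0 for all i ≠ j. Define φθ by φθ(x,y) = θ(φ(x), φ(y)). Then the algebras E_{φθ} and E_θ are isomorphic. -/
theorem stmt6_general {F E V : Type*} [Field F] [AddCommGroup E] [Module F E]
    [AddCommGroup V] [Module F V]
    (m : E →ₗ[F] E →ₗ[F] E)
    (θ : E →ₗ[F] E →ₗ[F] V)
    (φ : E ≃ₗ[F] E) (hφ : ∀ x y : E, φ (m x y) = m (φ x) (φ y)) :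
    ∃ σ : (E × V) ≃ₗ[F] (E × V),
      ∀ p q : E × V,
        σ (m p.1 q.1, θ (φ p.1) (φ q.1)) = (m (σ p).1 (σ q).1, θ (σ p).1 (σ q).1) :=
  ⟨φ.prodCongr (LinearEquiv.refl F V), fun p q => by
    simp only [LinearEquiv.prodCongr_apply, LinearEquiv.refl_apply, hφ]⟩

/-- Let `E` be an evolution algebra (multiplication `m`, natural basis `b`),
`θ ∈ Z(E×E, V)`, and `φ` an automorphism of `E` with `θ(φ(eᵢ), φ(eⱼ)) = 0` for `i ≠ j`.
With `φθ(x,y) = θ(φ(x), φ(y))`, the algebras `E_{φθ}` and `E_θ` (on `E ⊕ V`, products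
`(x+v)(y+w) = xy + φθ(x,y)` resp. `xy + θ(x,y)`) are isomorphic. -/
theorem stmt6 {F E V : Type*} [Field F] [AddCommGroup E] [Module F E]
    [AddCommGroup V] [Module F V] {mdim : ℕ}
    (m : E →ₗ[F] E →ₗ[F] E) (hcomm : ∀ x y : E, m x y = m y x)
    (b : Module.Basis (Fin mdim) F E) (hnat : ∀ i j : Fin mdim, i ≠ j → m (b i) (b j) = 0)
    (θ : E →ₗ[F] E →ₗ[F] V) (hθsym : ∀ x y : E, θ x y = θ y x)
    (hθnat : ∀ i j : Fin mdim, i ≠ j → θ (b i) (b j) = 0)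
    (φ : E ≃ₗ[F] E) (hφ : ∀ x y : E, φ (m x y) = m (φ x) (φ y))
    (hφθ : ∀ i j : Fin mdim, i ≠ j → θ (φ (b i)) (φ (b j)) = 0) :
    ∃ σ : (E × V) ≃ₗ[F] (E × V),
      ∀ p q : E × V,
        σ (m p.1 q.1, θ (φ p.1) (φ q.1)) = (m (σ p).1 (σ q).1, θ (σ p).1 (σ q).1) :=
  stmt6_general m θ φ hφ
end

section
/- For the 2-dimensional nilpotent evolution algebra E with e₁² = e₂ (other products zero), the space B(E×E,F) of coboundaries is spanned by δ_{e₁,e₁}, and hence H(E×E,F) is 1-dimensional, spanned by the class [δ_{e₂,e₂}]. -/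
/-!
Since `xy = x₀y₀ e₂`, every coboundary `δf` equals `f(e₂) δ_{e₁,e₁}`. A symmetric form vanishing
at `(e₁,e₂)` is determined by its two diagonal values, so `Z = span {δ_{e₁,e₁}, δ_{e₂,e₂}}`, and
`δ_{e₂,e₂}` is not a multiple of `δ_{e₁,e₁}` (compare the values at `(e₂,e₂)`).
-/

/-- Multiplication of the evolution algebra `E : e₁² = e₂` on `F²`
(all other products of natural basis vectors are zero). -/
def mulE22 {F : Type*} [Field F] : (Fin 2 → F) → (Fin 2 → F) → (Fin 2 → F) :=
  fun x y => ![0, x 0 * y 0]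

open Submodule

theorem Submodule.map_mkQ_eq_span_singleton {R M : Type*} [Ring R] [AddCommGroup M] [Module R M]
    {Z B : Submodule R M} {v : M} (hv : v ∈ Z) (hZ : Z ≤ span R {v} ⊔ B) :
    Z.map B.mkQ = span R {B.mkQ v} := by
  refine le_antisymm ?_ (span_le.2 <| Set.singleton_subset_iff.2 <| mem_map_of_mem hv)
  calc Z.map B.mkQ ≤ (span R {v} ⊔ B).map B.mkQ := map_mono hZ
    _ = span R {B.mkQ v} := by
      rw [map_sup, mkQ_map_self, sup_bot_eq, map_span, Set.image_singleton]

section EvolutionAlgebra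

variable {F : Type*} [Field F] {δ11 δ22 : (Fin 2 → F) →ₗ[F] (Fin 2 → F) →ₗ[F] F}

theorem mulE22_eq_smul_single (x y : Fin 2 → F) :
    mulE22 x y = (x 0 * y 0) • (Pi.single 1 1 : Fin 2 → F) := by
  funext i
  fin_cases i <;> simp [mulE22]

theorem exists_eq_comp_mulE22_iff_mem_span (h11 : ∀ x y, δ11 x y = x 0 * y 0)
    (θ : (Fin 2 → F) →ₗ[F] (Fin 2 → F) →ₗ[F] F) :
    (∃ f : (Fin 2 → F) →ₗ[F] F, ∀ x y, θ x y = f (mulE22 x y)) ↔ θ ∈ span F {δ11} := by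
  rw [mem_span_singleton]
  constructor
  · rintro ⟨f, hf⟩
    refine ⟨f (Pi.single 1 1), LinearMap.ext₂ fun x y => ?_⟩
    rw [hf, mulE22_eq_smul_single, map_smul, LinearMap.smul_apply, LinearMap.smul_apply, h11,
      smul_eq_mul, smul_eq_mul, mul_comm]
  · rintro ⟨c, rfl⟩
    exact ⟨c • LinearMap.proj 1, fun x y => by simp [h11, mulE22]⟩

theorem eq_smul_add_smul_of_symm (h11 : ∀ x y, δ11 x y = x 0 * y 0)
    (h22 : ∀ x y, δ22 x y = x 1 * y 1) {θ : (Fin 2 → F) →ₗ[F] (Fin 2 → F) →ₗ[F] F}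
    (hsymm : ∀ x y, θ x y = θ y x) (h01 : θ (Pi.single 0 1) (Pi.single 1 1) = 0) :
    θ = θ (Pi.single 0 1) (Pi.single 0 1) • δ11 + θ (Pi.single 1 1) (Pi.single 1 1) • δ22 := by
  have h10 : θ (Pi.single 1 1) (Pi.single 0 1) = 0 := hsymm _ _ ▸ h01
  refine LinearMap.ext_basis (Pi.basisFun F (Fin 2)) (Pi.basisFun F (Fin 2)) fun i j => ?_
  fin_cases i <;> fin_cases j <;> simp [h11, h22, h01, h10]

theorem notMem_span_singleton_of_diag (h11 : ∀ x y, δ11 x y = x 0 * y 0)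
    (h22 : ∀ x y, δ22 x y = x 1 * y 1) : δ22 ∉ span F {δ11} := by
  rw [mem_span_singleton]
  rintro ⟨c, hc⟩
  have h := LinearMap.congr_fun₂ hc (Pi.single 1 1) (Pi.single 1 1)
  simp [h11, h22] at h

end EvolutionAlgebra

theorem stmt10_general {F : Type*} [Field F]
    (δ11 δ22 : (Fin 2 → F) →ₗ[F] (Fin 2 → F) →ₗ[F] F)
    (h11 : ∀ x y, δ11 x y = x 0 * y 0) (h22 : ∀ x y, δ22 x y = x 1 * y 1)
    (Z B : Submodule F ((Fin 2 → F) →ₗ[F] (Fin 2 → F) →ₗ[F] F))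
    (hZ : ∀ θ : (Fin 2 → F) →ₗ[F] (Fin 2 → F) →ₗ[F] F, θ ∈ Z ↔
      ((∀ x y, θ x y = θ y x) ∧
        θ (Pi.single 0 1 : Fin 2 → F) (Pi.single 1 1 : Fin 2 → F) = 0))
    (hB : ∀ θ : (Fin 2 → F) →ₗ[F] (Fin 2 → F) →ₗ[F] F, θ ∈ B ↔
      ∃ f : (Fin 2 → F) →ₗ[F] F, ∀ x y, θ x y = f (mulE22 x y)) :
    B = Submodule.span F {δ11} ∧
    Module.finrank F ↥(Z.map (Submodule.mkQ (R := F) (M := (Fin 2 → F) →ₗ[F] (Fin 2 → F) →ₗ[F] F) B)) = 1 ∧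
    Submodule.span F {B.mkQ δ22} = Z.map (Submodule.mkQ (R := F) (M := (Fin 2 → F) →ₗ[F] (Fin 2 → F) →ₗ[F] F) B) := by
  have hB_eq : B = span F {δ11} := by
    ext θ
    rw [hB, exists_eq_comp_mulE22_iff_mem_span h11]
  have hδ22 : δ22 ∈ Z := (hZ δ22).2 ⟨fun x y => by rw [h22, h22, mul_comm], by simp [h22]⟩
  have hZ_le : Z ≤ span F {δ22} ⊔ B := by
    intro θ hθ
    obtain ⟨hsymm, h01⟩ := (hZ θ).1 hθ
    rw [eq_smul_add_smul_of_symm h11 h22 hsymm h01, add_comm, hB_eq]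
    exact add_mem_sup (smul_mem _ _ (mem_span_singleton_self _))
      (smul_mem _ _ (mem_span_singleton_self _))
  have hmap := map_mkQ_eq_span_singleton (M := (Fin 2 → F) →ₗ[F] (Fin 2 → F) →ₗ[F] F) hδ22 hZ_le
  refine ⟨hB_eq, ?_, hmap.symm⟩
  rw [hmap, finrank_span_singleton]
  rw [Ne, mkQ_apply, Quotient.mk_eq_zero, hB_eq]
  exact notMem_span_singleton_of_diag h11 h22

/-- For the 2-dimensional nilpotent evolution algebra `E` with
`e₁² = e₂`, the space `B(E×E,F)` of coboundaries `δf(x,y) = f(xy)` is spanned by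
`δ_{e₁,e₁}` (the symmetric form with `δ_{e₁,e₁}(x,y) = x₀y₀`), and hence
`H(E×E,F) = Z/B` is 1-dimensional, spanned by the class `[δ_{e₂,e₂}]`
(where `δ_{e₂,e₂}(x,y) = x₁y₁` and `Z` consists of the symmetric bilinear forms
vanishing at `(e₁,e₂)`). -/
theorem stmt10 {F : Type*} [Field F]
    (δ11 δ22 : (Fin 2 → F) →ₗ[F] (Fin 2 → F) →ₗ[F] F)
    (h11 : ∀ x y, δ11 x y = x 0 * y 0) (h22 : ∀ x y, δ22 x y = x 1 * y 1)
    (Z B : Submodule F ((Fin 2 → F) →ₗ[F] (Fin 2 → F) →ₗ[F] F))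
    (hZ : ∀ θ : (Fin 2 → F) →ₗ[F] (Fin 2 → F) →ₗ[F] F, θ ∈ Z ↔
      ((∀ x y, θ x y = θ y x) ∧
        θ (Pi.single 0 1 : Fin 2 → F) (Pi.single 1 1 : Fin 2 → F) = 0))
    (hB : ∀ θ : (Fin 2 → F) →ₗ[F] (Fin 2 → F) →ₗ[F] F, θ ∈ B ↔
      ∃ f : (Fin 2 → F) →ₗ[F] F, ∀ x y, θ x y = f (mulE22 x y))
    (hBZ : B ≤ Z) :
    B = Submodule.span F {δ11} ∧
    Module.finrank F ↥(Z.map (Submodule.mkQ (R := F) (M := (Fin 2 → F) →ₗ[F] (Fin 2 → F) →ₗ[F] F) B)) = 1 ∧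
    Submodule.span F {B.mkQ δ22} = Z.map (Submodule.mkQ (R := F) (M := (Fin 2 → F) →ₗ[F] (Fin 2 → F) →ₗ[F] F) B) :=
  stmt10_general δ11 δ22 h11 h22 Z B hZ hB
end

section
/- Over an algebraically closed field F, any 3-dimensional nilpotent evolution algebra with 1-dimensional annihilator generated by e₃ and with e₁² = e₃, e₂² = e₃ is isomorphic to the algebra E_{3,3} : e₁² = e₃, e₂² = e₃ (all other basis products zero), and every automorphism φ of E_{3,3} fixes the span of e₃ and satisfies a₁₁² + a₂₁² = a₃₃, a₁₂² + a₂₂² = a₃₃, a₁₁a₁₂ + a₂₁a₂₂ = 0, where (a_{ij}) is the matrix of φ in the natural basis. -/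
/-- The descending sequence of subspaces `E^⟨k+1⟩`:
`epow F mul 0 = E = E^⟨1⟩` and `epow F mul (k+1) = E^⟨k+2⟩ = E^⟨k+1⟩ · E`. -/
def epow (F : Type*) [Field F] {E : Type*} [AddCommGroup E] [Module F E]
    (mul : E → E → E) : ℕ → Submodule F E
  | 0 => ⊤
  | k + 1 => Submodule.span F {z : E | ∃ x ∈ epow F mul k, ∃ y : E, z = mul x y}

/-- Multiplication of the evolution algebra `E₃,₃ : e₁² = e₃, e₂² = e₃` on `F³`
(all other products of natural basis vectors are zero). -/
def mulE33 {F : Type*} [Field F] : (Fin 3 → F) → (Fin 3 → F) → (Fin 3 → F) :=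
  fun x y => ![0, 0, x 0 * y 0 + x 1 * y 1]

/-!
In an evolution algebra the product of `x = Σ xᵢ eᵢ` and `y = Σ yᵢ eᵢ` is `Σ xᵢ yᵢ eᵢ²`.
Since `e₃` spans the annihilator, `e₃² = 0`, so the coordinate map of the basis is already an
isomorphism onto `E₃,₃`, whose product is `(x₁y₁ + x₂y₂) e₃`. An automorphism `φ` of `E₃,₃`
maps the annihilator `F e₃` onto itself, so `φ e₃ = a₃₃ e₃` with `a₃₃ ≠ 0`, and comparing the
`e₃`-coordinates of `φ (x y) = φ x φ y` shows that `φ` multiplies the form `x₁y₁ + x₂y₂` by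
`a₃₃`; on pairs of basis vectors this gives the three relations.
-/

theorem LinearMap.apply_eq_sum_repr_mul_repr_smul_of_apply_basis_eq_zero
    {R M N ι : Type*} [CommSemiring R] [AddCommMonoid M] [Module R M] [AddCommMonoid N]
    [Module R N] [Fintype ι] (B : M →ₗ[R] M →ₗ[R] N) (b : Module.Basis ι R M)
    (hB : ∀ i j, i ≠ j → B (b i) (b j) = 0) (x y : M) :
    B x y = ∑ i, (b.repr x i * b.repr y i) • B (b i) (b i) := by
  conv_lhs => rw [← b.sum_repr x, ← b.sum_repr y]
  simp only [map_sum, map_smul, LinearMap.sum_apply, LinearMap.smul_apply]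
  refine Finset.sum_congr rfl fun i _ => ?_
  rw [Finset.sum_eq_single i (fun j _ hji => by rw [hB j i hji, smul_zero]) (by simp),
    smul_smul, mul_comm]

section E33

variable {F : Type*} [Field F]

theorem mulE33_eq_smul_single (x y : Fin 3 → F) :
    mulE33 x y = (x 0 * y 0 + x 1 * y 1) • Pi.single 2 1 := by
  funext i
  fin_cases i <;> simp [mulE33]

theorem mulE33_single_two_left (y : Fin 3 → F) : mulE33 (Pi.single 2 1) y = 0 := by
  simp [mulE33_eq_smul_single]

theorem eq_smul_single_two_of_forall_mulE33_eq_zero {v : Fin 3 → F}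
    (hv : ∀ y, mulE33 v y = 0) : v = v 2 • Pi.single 2 1 := by
  have h0 : v 0 = 0 := by simpa [mulE33] using congrFun (hv (Pi.single 0 1)) 2
  have h1 : v 1 = 0 := by simpa [mulE33] using congrFun (hv (Pi.single 1 1)) 2
  funext i
  fin_cases i <;> simp [h0, h1]

theorem mulE33_map_left_eq_zero_of_map_mul {φ : (Fin 3 → F) ≃ₗ[F] (Fin 3 → F)}
    (hφ : ∀ x y, φ (mulE33 x y) = mulE33 (φ x) (φ y)) {v : Fin 3 → F}
    (hv : ∀ y, mulE33 v y = 0) (y : Fin 3 → F) : mulE33 (φ v) y = 0 := by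
  rw [← φ.apply_symm_apply y, ← hφ, hv, map_zero]

theorem map_span_single_two_of_map_mul {φ : (Fin 3 → F) ≃ₗ[F] (Fin 3 → F)}
    (hφ : ∀ x y, φ (mulE33 x y) = mulE33 (φ x) (φ y)) :
    (Submodule.span F {(Pi.single 2 1 : Fin 3 → F)}).map φ.toLinearMap =
      Submodule.span F {(Pi.single 2 1 : Fin 3 → F)} := by
  have hφe : φ (Pi.single 2 1) = φ (Pi.single 2 1) 2 • Pi.single 2 1 :=
    eq_smul_single_two_of_forall_mulE33_eq_zero
      (mulE33_map_left_eq_zero_of_map_mul hφ mulE33_single_two_left)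
  have hc : φ (Pi.single 2 1) 2 ≠ 0 := fun hc => by
    rw [hc, zero_smul, φ.map_eq_zero_iff] at hφe
    simpa using congrFun hφe 2
  rw [Submodule.map_span, Set.image_singleton, LinearEquiv.coe_coe, hφe,
    Submodule.span_singleton_smul_eq (IsUnit.mk0 _ hc)]

theorem mulE33_form_map_eq_mul_of_map_mul {φ : (Fin 3 → F) →ₗ[F] (Fin 3 → F)}
    (hφ : ∀ x y, φ (mulE33 x y) = mulE33 (φ x) (φ y)) (x y : Fin 3 → F) :
    φ x 0 * φ y 0 + φ x 1 * φ y 1 = (x 0 * y 0 + x 1 * y 1) * φ (Pi.single 2 1) 2 := by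
  simpa [mulE33_eq_smul_single] using (congrFun (hφ x y) 2).symm

theorem Module.Basis.equivFun_mul_eq_mulE33 {E : Type*} [AddCommGroup E] [Module F E]
    (m : E →ₗ[F] E →ₗ[F] E) (b : Module.Basis (Fin 3) F E)
    (hnat : ∀ i j : Fin 3, i ≠ j → m (b i) (b j) = 0)
    (h1 : m (b 0) (b 0) = b 2) (h2 : m (b 1) (b 1) = b 2) (h3 : m (b 2) (b 2) = 0)
    (x y : E) : b.equivFun (m x y) = mulE33 (b.equivFun x) (b.equivFun y) := by
  rw [m.apply_eq_sum_repr_mul_repr_smul_of_apply_basis_eq_zero b hnat, Fin.sum_univ_three,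
    h1, h2, h3, smul_zero, add_zero, ← add_smul, map_smul]
  funext i
  fin_cases i <;> simp [mulE33]

end E33

theorem stmt11_general {F E : Type*} [Field F] [AddCommGroup E] [Module F E]
    (m : E →ₗ[F] E →ₗ[F] E)
    (b : Module.Basis (Fin 3) F E) (hnat : ∀ i j : Fin 3, i ≠ j → m (b i) (b j) = 0)
    (h1 : m (b 0) (b 0) = b 2) (h2 : m (b 1) (b 1) = b 2)
    (hann : LinearMap.ker m = Submodule.span F {b 2}) :
    (∃ σ : E ≃ₗ[F] (Fin 3 → F), ∀ x y : E, σ (m x y) = mulE33 (σ x) (σ y)) ∧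
    ∀ φ : (Fin 3 → F) ≃ₗ[F] (Fin 3 → F),
      (∀ x y, φ (mulE33 x y) = mulE33 (φ x) (φ y)) →
      (Submodule.span F {(Pi.single 2 1 : Fin 3 → F)}).map φ.toLinearMap =
          Submodule.span F {(Pi.single 2 1 : Fin 3 → F)} ∧
      ∀ a : Fin 3 → Fin 3 → F,
        (∀ i j : Fin 3, a i j = φ (Pi.single j 1) i) →
        (a 0 0 ^ 2 + a 1 0 ^ 2 = a 2 2 ∧
         a 0 1 ^ 2 + a 1 1 ^ 2 = a 2 2 ∧
         a 0 0 * a 0 1 + a 1 0 * a 1 1 = 0) := by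
  have h3 : m (b 2) (b 2) = 0 := by
    have hb2 : b 2 ∈ LinearMap.ker m := hann ▸ Submodule.mem_span_singleton_self _
    rw [LinearMap.mem_ker.mp hb2, LinearMap.zero_apply]
  refine ⟨⟨b.equivFun, b.equivFun_mul_eq_mulE33 m hnat h1 h2 h3⟩,
    fun φ hφ => ⟨map_span_single_two_of_map_mul hφ, fun a ha => ?_⟩⟩
  have hq := mulE33_form_map_eq_mul_of_map_mul (φ := φ.toLinearMap) hφ
  simp only [ha]
  refine ⟨?_, ?_, ?_⟩
  · simpa [sq] using hq (Pi.single 0 1) (Pi.single 0 1)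
  · simpa [sq] using hq (Pi.single 1 1) (Pi.single 1 1)
  · simpa using hq (Pi.single 0 1) (Pi.single 1 1)

/-- Over an algebraically closed field `F`, any 3-dimensional nilpotent
evolution algebra with 1-dimensional annihilator generated by `e₃` and with
`e₁² = e₃, e₂² = e₃` is isomorphic to `E₃,₃ : e₁² = e₃, e₂² = e₃`, and every automorphism
`φ` of `E₃,₃` fixes the span of `e₃` and satisfies `a₁₁² + a₂₁² = a₃₃`,
`a₁₂² + a₂₂² = a₃₃`, `a₁₁a₁₂ + a₂₁a₂₂ = 0`, where `(a i j)` is the matrix of `φ` in the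
natural basis (column convention `φ(eⱼ) = Σᵢ a i j • eᵢ`). -/
theorem stmt11 {F E : Type*} [Field F] [IsAlgClosed F] [AddCommGroup E] [Module F E]
    (m : E →ₗ[F] E →ₗ[F] E) (hcomm : ∀ x y : E, m x y = m y x)
    (b : Module.Basis (Fin 3) F E) (hnat : ∀ i j : Fin 3, i ≠ j → m (b i) (b j) = 0)
    (h1 : m (b 0) (b 0) = b 2) (h2 : m (b 1) (b 1) = b 2)
    (hann : LinearMap.ker m = Submodule.span F {b 2})
    (hnil : ∃ k, epow F (fun x y => m x y) k = ⊥) :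
    (∃ σ : E ≃ₗ[F] (Fin 3 → F), ∀ x y : E, σ (m x y) = mulE33 (σ x) (σ y)) ∧
    ∀ φ : (Fin 3 → F) ≃ₗ[F] (Fin 3 → F),
      (∀ x y, φ (mulE33 x y) = mulE33 (φ x) (φ y)) →
      (Submodule.span F {(Pi.single 2 1 : Fin 3 → F)}).map φ.toLinearMap =
          Submodule.span F {(Pi.single 2 1 : Fin 3 → F)} ∧
      ∀ a : Fin 3 → Fin 3 → F,
        (∀ i j : Fin 3, a i j = φ (Pi.single j 1) i) →
        (a 0 0 ^ 2 + a 1 0 ^ 2 = a 2 2 ∧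
         a 0 1 ^ 2 + a 1 1 ^ 2 = a 2 2 ∧
         a 0 0 * a 0 1 + a 1 0 * a 1 1 = 0) :=
  stmt11_general m b hnat h1 h2 hann
end

section
/- Over an algebraically closed field F, the 4-dimensional evolution algebras E_{4,7} : e₁² = e₃, e₂² = e₃, e₃² = e₄ and E_{4,8} : e₁² = e₃ + e₄, e₂² = e₃, e₃² = e₄ (all other natural-basis products zero) are both nilpotent but are not isomorphic. -/
/-- Multiplication of `E₄,₇ : e₁² = e₃, e₂² = e₃, e₃² = e₄` on `F⁴`. -/
def mulE47 {F : Type*} [Field F] : (Fin 4 → F) → (Fin 4 → F) → (Fin 4 → F) :=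
  fun x y => ![0, 0, x 0 * y 0 + x 1 * y 1, x 2 * y 2]

/-- Multiplication of `E₄,₈ : e₁² = e₃ + e₄, e₂² = e₃, e₃² = e₄` on `F⁴`. -/
def mulE48 {F : Type*} [Field F] : (Fin 4 → F) → (Fin 4 → F) → (Fin 4 → F) :=
  fun x y => ![0, 0, x 0 * y 0 + x 1 * y 1, x 0 * y 0 + x 2 * y 2]

/-!
Both algebras are graded by giving `e₁, e₂` degree 0, `e₃` degree 1 and `e₄` degree 2: each
coordinate of a product `x y` only involves coordinates of `x` of strictly smaller degree, so
`E^⟨k+1⟩` vanishes in degrees `< k`, and `E^⟨4⟩ = 0`.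

An isomorphism `σ : E₄,₇ → E₄,₈` would send `e₁, e₂` to `u, v` with `u² = v²`, `u v = 0`,
`u u² = v v² = 0` and `(u²)² = σ e₄ ≠ 0`. In coordinates of `E₄,₈` the last two conditions force
`u₃ = v₃ = 0`, after which `u₁² = v₁²`, `u₁ v₁ = 0`, `u₂² = v₂²`, `u₂ v₂ = 0` make `u` and `v` vanish
in the first two coordinates as well, so `u² = 0`.
-/

section Grading

variable {F ι : Type*} [Field F]

def vanishingBelow (d : ι → ℕ) (k : ℕ) : Submodule F (ι → F) :=
  Submodule.pi {i | d i < k} fun _ => ⊥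

theorem mem_vanishingBelow {d : ι → ℕ} {k : ℕ} {x : ι → F} :
    x ∈ vanishingBelow d k ↔ ∀ i, d i < k → x i = 0 := by
  simp [vanishingBelow, Submodule.mem_pi]

theorem vanishingBelow_eq_bot {d : ι → ℕ} {k : ℕ} (hk : ∀ i, d i < k) :
    vanishingBelow (F := F) d k = ⊥ := by
  ext x
  simp only [mem_vanishingBelow, Submodule.mem_bot, funext_iff]
  exact ⟨fun h i => h i (hk i), fun h i _ => h i⟩

theorem epow_le_vanishingBelow {mul : (ι → F) → (ι → F) → ι → F} {d : ι → ℕ}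
    (hmul : ∀ x y i, (∀ j, d j < d i → x j = 0) → mul x y i = 0) (k : ℕ) :
    epow F mul k ≤ vanishingBelow d k := by
  induction k with
  | zero => intro x _; simp [mem_vanishingBelow]
  | succ k ih =>
    refine Submodule.span_le.2 ?_
    rintro _ ⟨x, hx, y, rfl⟩
    exact mem_vanishingBelow.2 fun i hi =>
      hmul x y i fun j hj => mem_vanishingBelow.1 (ih hx) j (by omega)

theorem epow_eq_bot_of_degree_lt {mul : (ι → F) → (ι → F) → ι → F} {d : ι → ℕ}
    (hmul : ∀ x y i, (∀ j, d j < d i → x j = 0) → mul x y i = 0) {k : ℕ}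
    (hk : ∀ i, d i < k) : epow F mul k = ⊥ :=
  eq_bot_iff.2 <| (epow_le_vanishingBelow hmul k).trans_eq (vanishingBelow_eq_bot hk)

end Grading

theorem epow_mulE47_three {F : Type*} [Field F] : epow F (mulE47 (F := F)) 3 = ⊥ :=
  epow_eq_bot_of_degree_lt (d := ![0, 0, 1, 2])
    (fun x y i hx => by
      fin_cases i <;> simp [Fin.forall_fin_succ] at hx <;> simp [mulE47, hx])
    (by decide)

theorem epow_mulE48_three {F : Type*} [Field F] : epow F (mulE48 (F := F)) 3 = ⊥ :=
  epow_eq_bot_of_degree_lt (d := ![0, 0, 1, 2])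
    (fun x y i hx => by
      fin_cases i <;> simp [Fin.forall_fin_succ] at hx <;> simp [mulE48, hx])
    (by decide)

theorem eq_zero_of_sq_eq_sq_of_mul_eq_zero {R : Type*} [CommRing R] [IsReduced R] {a b : R}
    (hsq : a ^ 2 = b ^ 2) (hmul : a * b = 0) : a = 0 :=
  IsReduced.eq_zero a ⟨4, by linear_combination a ^ 2 * hsq + a * b * hmul⟩

theorem mulE48_sq_sq_eq_zero {F : Type*} [Field F] {u v : Fin 4 → F}
    (hsq : mulE48 u u = mulE48 v v) (huv : mulE48 u v = 0)
    (hu : mulE48 u (mulE48 u u) = 0) (hv : mulE48 v (mulE48 v v) = 0) :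
    mulE48 (mulE48 u u) (mulE48 u u) = 0 := by
  have hsq2 := congrFun hsq 2
  have hsq3 := congrFun hsq 3
  have huv2 := congrFun huv 2
  have huv3 := congrFun huv 3
  have hu3 := congrFun hu 3
  have hv3 := congrFun hv 3
  simp only [mulE48, Matrix.cons_val, Pi.zero_apply, mul_zero, zero_add]
    at hsq2 hsq3 huv2 huv3 hu3 hv3
  suffices h : u 0 * u 0 + u 1 * u 1 = 0 by ext i; fin_cases i <;> simp [mulE48, h]
  by_contra hne
  have hu2 : u 2 = 0 := (mul_eq_zero.1 hu3).resolve_right hne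
  have hv2 : v 2 = 0 := (mul_eq_zero.1 hv3).resolve_right (hsq2 ▸ hne)
  have hu0 : u 0 = 0 := eq_zero_of_sq_eq_sq_of_mul_eq_zero (b := v 0)
    (by simpa [hu2, hv2, sq] using hsq3) (by simpa [hu2] using huv3)
  have hv0 : v 0 = 0 := eq_zero_of_sq_eq_sq_of_mul_eq_zero (b := u 0)
    (by simpa [hu2, hv2, sq] using hsq3.symm) (by simpa [hu2, mul_comm] using huv3)
  have hu1 : u 1 = 0 := eq_zero_of_sq_eq_sq_of_mul_eq_zero (b := v 1)
    (by simpa [hu0, hv0, sq] using hsq2) (by simpa [hu0] using huv2)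
  exact hne (by simp [hu0, hu1])

theorem stmt12_general {F : Type*} [Field F] :
    (∃ k, epow F (mulE47 (F := F)) k = ⊥) ∧
    (∃ k, epow F (mulE48 (F := F)) k = ⊥) ∧
    ¬ ∃ σ : (Fin 4 → F) ≃ₗ[F] (Fin 4 → F),
        ∀ x y, σ (mulE47 x y) = mulE48 (σ x) (σ y) := by
  refine ⟨⟨3, epow_mulE47_three⟩, ⟨3, epow_mulE48_three⟩, ?_⟩
  rintro ⟨σ, hσ⟩
  let e : Fin 4 → Fin 4 → F := fun i => Pi.single i 1
  obtain ⟨h00, h11, h22, h01, h02, h12⟩ :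
      mulE47 (e 0) (e 0) = e 2 ∧ mulE47 (e 1) (e 1) = e 2 ∧ mulE47 (e 2) (e 2) = e 3 ∧
      mulE47 (e 0) (e 1) = 0 ∧ mulE47 (e 0) (e 2) = 0 ∧ mulE47 (e 1) (e 2) = 0 := by
    refine ⟨?_, ?_, ?_, ?_, ?_, ?_⟩ <;> ext k <;> fin_cases k <;> simp [mulE47, e]
  have h := mulE48_sq_sq_eq_zero (u := σ (e 0)) (v := σ (e 1))
    (by rw [← hσ, ← hσ, h00, h11]) (by rw [← hσ, h01, map_zero])
    (by rw [← hσ, ← hσ, h00, h02, map_zero]) (by rw [← hσ, ← hσ, h11, h12, map_zero])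
  rw [← hσ, ← hσ, h00, h22, map_eq_zero_iff σ σ.injective] at h
  simp [e] at h

/-- Over an algebraically closed field `F`, the 4-dimensional evolution
algebras `E₄,₇` and `E₄,₈` are both nilpotent but are not isomorphic. -/
theorem stmt12 {F : Type*} [Field F] [IsAlgClosed F] :
    (∃ k, epow F (mulE47 (F := F)) k = ⊥) ∧
    (∃ k, epow F (mulE48 (F := F)) k = ⊥) ∧
    ¬ ∃ σ : (Fin 4 → F) ≃ₗ[F] (Fin 4 → F),
        ∀ x y, σ (mulE47 x y) = mulE48 (σ x) (σ y) :=
  stmt12_general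
end

section
/- Over an algebraically closed field F, the 5-dimensional evolution algebras E_{5,13} : e₁² = e₂² = e₃, e₃² = e₄² = e₅ and E_{5,14} : e₁² = e₃ + e₅, e₂² = e₃, e₃² = e₄² = e₅ are not isomorphic. -/
/-!
An isomorphism `σ : E₅,₁₃ → E₅,₁₄` would send `e₁, e₂, e₃` to `u, v, t` with `u² = v² = t`,
`uv = 0`, and `u·A, v·A ⊆ F t`, because `e₁·A = e₂·A = F e₃`. In `E₅,₁₄` these relations force
the `e₃`-coordinate of `t` to vanish, and then `σ e₅ = σ (e₃²) = t² = 0`.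
-/

/-- Multiplication of `E₅,₁₃ : e₁² = e₂² = e₃, e₃² = e₄² = e₅` on `F⁵`. -/
def mulE513 {F : Type*} [Field F] : (Fin 5 → F) → (Fin 5 → F) → (Fin 5 → F) :=
  fun x y => ![0, 0, x 0 * y 0 + x 1 * y 1, 0, x 2 * y 2 + x 3 * y 3]

/-- Multiplication of `E₅,₁₄ : e₁² = e₃ + e₅, e₂² = e₃, e₃² = e₄² = e₅` on `F⁵`. -/
def mulE514 {F : Type*} [Field F] : (Fin 5 → F) → (Fin 5 → F) → (Fin 5 → F) :=
  fun x y => ![0, 0, x 0 * y 0 + x 1 * y 1, 0, x 0 * y 0 + x 2 * y 2 + x 3 * y 3]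

theorem map_mul_mem_span_singleton {F M : Type*} [Field F] [AddCommGroup M] [Module F M]
    {μ₁ μ₂ : M → M → M} {σ : M ≃ₗ[F] M} (hσ : ∀ x y, σ (μ₁ x y) = μ₂ (σ x) (σ y)) {x e : M}
    (hx : ∀ y, μ₁ x y ∈ F ∙ e) (z : M) : μ₂ (σ x) z ∈ F ∙ σ e := by
  obtain ⟨a, ha⟩ := Submodule.mem_span_singleton.mp (hx (σ.symm z))
  rw [← σ.apply_symm_apply z, ← hσ, ← ha, map_smul]
  exact Submodule.smul_mem _ _ (Submodule.mem_span_singleton_self _)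

section

variable {F : Type*} [Field F]

theorem mulE513_single_zero_left (y : Fin 5 → F) :
    mulE513 (Pi.single 0 1) y = y 0 • Pi.single 2 1 := by
  funext i; fin_cases i <;> simp [mulE513]

theorem mulE513_single_one_left (y : Fin 5 → F) :
    mulE513 (Pi.single 1 1) y = y 1 • Pi.single 2 1 := by
  funext i; fin_cases i <;> simp [mulE513]

theorem mulE513_single_two_self :
    mulE513 (Pi.single 2 1 : Fin 5 → F) (Pi.single 2 1) = Pi.single 4 1 := by
  funext i; fin_cases i <;> simp [mulE513]

theorem mulE514_mulE514_self (x y : Fin 5 → F) :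
    mulE514 (mulE514 x y) (mulE514 x y) = (mulE514 x y 2 ^ 2) • Pi.single 4 1 := by
  funext i; fin_cases i <;> simp [mulE514, sq]

theorem coords_of_forall_mulE514_mem_span {x t : Fin 5 → F} (ht : t 2 ≠ 0)
    (hx : ∀ z, mulE514 x z ∈ F ∙ t) : x 2 = 0 ∧ x 3 = 0 ∧ t 4 * x 1 = 0 := by
  obtain ⟨a, ha⟩ := Submodule.mem_span_singleton.mp (hx (Pi.single 2 1))
  obtain ⟨b, hb⟩ := Submodule.mem_span_singleton.mp (hx (Pi.single 3 1))
  obtain ⟨c, hc⟩ := Submodule.mem_span_singleton.mp (hx (Pi.single 1 1))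
  have ha0 : a = 0 := by simpa [mulE514, ht] using congrFun ha 2
  have hb0 : b = 0 := by simpa [mulE514, ht] using congrFun hb 2
  have ha4 : a * t 4 = x 2 := by simpa [mulE514] using congrFun ha 4
  have hb4 : b * t 4 = x 3 := by simpa [mulE514] using congrFun hb 4
  have hc2 : c * t 2 = x 1 := by simpa [mulE514] using congrFun hc 2
  have hc4 : c * t 4 = 0 := by simpa [mulE514] using congrFun hc 4
  refine ⟨?_, ?_, ?_⟩
  · rw [← ha4, ha0, zero_mul]
  · rw [← hb4, hb0, zero_mul]
  · rw [← hc2]; linear_combination t 2 * hc4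

theorem mulE514_two_eq_zero_of_orthogonal_roots {u v t : Fin 5 → F}
    (hu : ∀ z, mulE514 u z ∈ F ∙ t) (hv : ∀ z, mulE514 v z ∈ F ∙ t)
    (huu : mulE514 u u = t) (hvv : mulE514 v v = t) (huv : mulE514 u v = 0) : t 2 = 0 := by
  by_contra ht
  obtain ⟨hu2, hu3, hu1⟩ := coords_of_forall_mulE514_mem_span ht hu
  obtain ⟨hv2, hv3, hv1⟩ := coords_of_forall_mulE514_mem_span ht hv
  have huu2 : u 0 * u 0 + u 1 * u 1 = t 2 := by simpa [mulE514] using congrFun huu 2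
  have hvv2 : v 0 * v 0 + v 1 * v 1 = t 2 := by simpa [mulE514] using congrFun hvv 2
  have huv2 : u 0 * v 0 + u 1 * v 1 = 0 := by simpa [mulE514] using congrFun huv 2
  have huu4 : u 0 * u 0 = t 4 := by simpa [mulE514, hu2, hu3] using congrFun huu 4
  have hvv4 : v 0 * v 0 = t 4 := by simpa [mulE514, hv2, hv3] using congrFun hvv 4
  have huv4 : u 0 * v 0 = 0 := by simpa [mulE514, hu2, hu3] using congrFun huv 4
  refine ht (pow_eq_zero_iff two_ne_zero |>.mp ?_)
  -- `t₂² = (u₀² + u₁²)(v₀² + v₁²) = u₀²v₁² + u₁²v₀² = t₄ (v₁² + u₁²) = 0`, as `u₀v₀ = u₁v₁ = 0`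
  linear_combination (-(v 0 * v 0 + v 1 * v 1)) * huu2 - t 2 * hvv2 + u 0 * v 0 * huv4
    + u 1 * v 1 * (huv2 - huv4) + v 1 * v 1 * huu4 + v 1 * hv1 + u 1 * u 1 * hvv4 + u 1 * hu1

end

theorem stmt15_general {F : Type*} [Field F] :
    ¬ ∃ σ : (Fin 5 → F) ≃ₗ[F] (Fin 5 → F),
        ∀ x y, σ (mulE513 x y) = mulE514 (σ x) (σ y) := by
  rintro ⟨σ, hσ⟩
  have hspan (i : Fin 5) (hi : ∀ y : Fin 5 → F, mulE513 (Pi.single i 1) y = y i • Pi.single 2 1)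
      (z : Fin 5 → F) : mulE514 (σ (Pi.single i 1)) z ∈ F ∙ σ (Pi.single 2 1) :=
    map_mul_mem_span_singleton hσ
      (fun y => hi y ▸ Submodule.smul_mem _ _ (Submodule.mem_span_singleton_self _)) z
  have huu : mulE514 (σ (Pi.single 0 1)) (σ (Pi.single 0 1)) = σ (Pi.single 2 1) := by
    rw [← hσ, mulE513_single_zero_left]; simp
  have hvv : mulE514 (σ (Pi.single 1 1)) (σ (Pi.single 1 1)) = σ (Pi.single 2 1) := by
    rw [← hσ, mulE513_single_one_left]; simp
  have huv : mulE514 (σ (Pi.single 0 1)) (σ (Pi.single 1 1)) = 0 := by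
    rw [← hσ, mulE513_single_zero_left]; simp
  have ht2 := mulE514_two_eq_zero_of_orthogonal_roots
    (hspan 0 mulE513_single_zero_left) (hspan 1 mulE513_single_one_left) huu hvv huv
  have h5 : σ (Pi.single 4 1) = 0 := by
    rw [← mulE513_single_two_self, hσ, ← huu, mulE514_mulE514_self, huu, ht2]; simp
  simpa using congrFun (σ.map_eq_zero_iff.mp h5) 4

/-- Over an algebraically closed field `F`, the 5-dimensional evolution
algebras `E₅,₁₃` and `E₅,₁₄` are not isomorphic. -/
theorem stmt15 {F : Type*} [Field F] [IsAlgClosed F] :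
    ¬ ∃ σ : (Fin 5 → F) ≃ₗ[F] (Fin 5 → F),
        ∀ x y, σ (mulE513 x y) = mulE514 (σ x) (σ y) :=
  stmt15_general
end
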